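/- arXiv:2309.10766 — 6 statements merged into one kernel-verified Lean document; each statement's English description precedes it below -/
import Mathlib

section
/- Suppose c is monotone submodular and f is monotone supermodular. Let 0 ≤ α < α', let S_α be any maximizer of S ↦ α·f(S) − c(S), and let S_{α'} be a maximizer of S ↦ α'·f(S) − c(S) that is maximal with respect to inclusion among maximizers. Then S_α ⊆ S_{α'}. -/
/-!
Let `S` maximize the utility at `α` and `T` at `α' ≥ α`. Passing from `T` to `S ⊔ T` raises the
cost by at most `c S - c (S ⊓ T)` (submodularity), which is at most `α (f S - f (S ⊓ T))` since `S`
beats `S ⊓ T` at `α`; this is at most `α' (f (S ⊔ T) - f T)` (supermodularity). So `S ⊔ T` is again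
a maximizer at `α'`, and inclusion-maximality of `T` forces `S ⊔ T = T`.
-/

section Lattice

variable {L : Type*} [Lattice L] (f c : L → ℝ)

def utility (γ : ℝ) (S : L) : ℝ := γ * f S - c S

variable {f c}

theorem utility_le_utility_sup_of_forall_le
    (hcsub : ∀ S T, c (S ⊔ T) + c (S ⊓ T) ≤ c S + c T)
    (hfsuper : ∀ S T, f S + f T ≤ f (S ⊔ T) + f (S ⊓ T)) (hfmono : Monotone f)
    {α α' : ℝ} (hα : 0 ≤ α) (hαα' : α ≤ α') {S : L}
    (hS : ∀ X, utility f c α X ≤ utility f c α S) (T : L) :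
    utility f c α' T ≤ utility f c α' (S ⊔ T) := by
  have hopt : utility f c α (S ⊓ T) ≤ utility f c α S := hS (S ⊓ T)
  have hgain : 0 ≤ f S - f (S ⊓ T) := sub_nonneg.2 (hfmono inf_le_left)
  have hcost : c (S ⊔ T) - c T ≤ α' * (f (S ⊔ T) - f T) :=
    calc c (S ⊔ T) - c T ≤ c S - c (S ⊓ T) := by linarith [hcsub S T]
      _ ≤ α * (f S - f (S ⊓ T)) := by unfold utility at hopt; linarith
      _ ≤ α' * (f S - f (S ⊓ T)) := mul_le_mul_of_nonneg_right hαα' hgain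
      _ ≤ α' * (f (S ⊔ T) - f T) :=
        mul_le_mul_of_nonneg_left (by linarith [hfsuper S T]) (hα.trans hαα')
  unfold utility
  linarith

theorem le_of_forall_le_utility_of_maximal
    (hcsub : ∀ S T, c (S ⊔ T) + c (S ⊓ T) ≤ c S + c T)
    (hfsuper : ∀ S T, f S + f T ≤ f (S ⊔ T) + f (S ⊓ T)) (hfmono : Monotone f)
    {α α' : ℝ} (hα : 0 ≤ α) (hαα' : α ≤ α') {S T : L}
    (hS : ∀ X, utility f c α X ≤ utility f c α S)
    (hT : ∀ X, utility f c α' X ≤ utility f c α' T)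
    (hmax : ∀ U, (∀ X, utility f c α' X ≤ utility f c α' U) → ¬ T < U) :
    S ≤ T := by
  have hsup : ∀ X, utility f c α' X ≤ utility f c α' (S ⊔ T) := fun X =>
    (hT X).trans (utility_le_utility_sup_of_forall_le hcsub hfsuper hfmono hα hαα' hS T)
  have heq : T = S ⊔ T := le_sup_right.eq_of_not_lt (hmax _ hsup)
  exact heq ▸ le_sup_left

end Lattice

theorem stmt5_general {A : Type*} [DecidableEq A]
    (f c : Finset A → ℝ)
    (hcsub : ∀ S T : Finset A, c (S ∪ T) + c (S ∩ T) ≤ c S + c T)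
    (hfmono : ∀ S T : Finset A, S ⊆ T → f S ≤ f T)
    (hfsuper : ∀ S T : Finset A, f S + f T ≤ f (S ∪ T) + f (S ∩ T))
    (α α' : ℝ) (hα : 0 ≤ α) (hαα' : α < α')
    (Sα Sα' : Finset A)
    (hSα : ∀ S : Finset A, α * f S - c S ≤ α * f Sα - c Sα)
    (hSα' : ∀ S : Finset A, α' * f S - c S ≤ α' * f Sα' - c Sα')
    (hmax : ∀ T : Finset A,
      (∀ S : Finset A, α' * f S - c S ≤ α' * f T - c T) → ¬ Sα' ⊂ T) :
    Sα ⊆ Sα' :=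
  le_of_forall_le_utility_of_maximal hcsub hfsuper (fun S T h => hfmono S T h) hα hαα'.le
    hSα hSα' hmax

/-- With monotone submodular costs and monotone supermodular
rewards, if `0 ≤ α < α'`, `S_α` is any maximizer at `α`, and `S_{α'}` is an
inclusion-maximal maximizer at `α'`, then `S_α ⊆ S_{α'}`. -/
theorem stmt5 {A : Type*} [Fintype A] [DecidableEq A]
    (f c : Finset A → ℝ)
    (hcmono : ∀ S T : Finset A, S ⊆ T → c S ≤ c T)
    (hcsub : ∀ S T : Finset A, c (S ∪ T) + c (S ∩ T) ≤ c S + c T)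
    (hfmono : ∀ S T : Finset A, S ⊆ T → f S ≤ f T)
    (hfsuper : ∀ S T : Finset A, f S + f T ≤ f (S ∪ T) + f (S ∩ T))
    (α α' : ℝ) (hα : 0 ≤ α) (hαα' : α < α')
    (Sα Sα' : Finset A)
    (hSα : ∀ S : Finset A, α * f S - c S ≤ α * f Sα - c Sα)
    (hSα' : ∀ S : Finset A, α' * f S - c S ≤ α' * f Sα' - c Sα')
    (hmax : ∀ T : Finset A,
      (∀ S : Finset A, α' * f S - c S ≤ α' * f T - c T) → ¬ Sα' ⊂ T) :
    Sα ⊆ Sα' :=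
  stmt5_general f c hcsub hfmono hfsuper α α' hα hαα' Sα Sα' hSα hSα' hmax
end

section
/- Suppose c is monotone submodular and f is monotone supermodular. Then the number of distinct sets that arise as inclusion-maximal maximizers of S ↦ α·f(S) − c(S) as α ranges over [0,1] is at most |A| + 1. -/
/-!
A Topkis-type comparative-statics argument: if `S` maximizes `α f - c` and `T` maximizes
`β f - c` with `0 ≤ α ≤ β`, then submodularity of `c`, supermodularity of `f` and the
monotonicity of `f` show that `S ∪ T` is again a maximizer at `β`. Hence the
inclusion-maximal maximizer `D α` is monotone in `α`, its values form a chain of subsets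
of `A`, and a chain of finsets has at most `|A| + 1` members since their cardinalities are
distinct.
-/

theorem Finset.ncard_le_card_add_one_of_isChain {A : Type*} [Fintype A]
    {s : Set (Finset A)} (hs : IsChain (· ≤ ·) s) : s.ncard ≤ Fintype.card A + 1 := by
  have hinj : Set.InjOn Finset.card s := by
    intro X hX Y hY hcard
    rcases hs.total hX hY with h | h
    · exact Finset.eq_of_subset_of_card_le h hcard.ge
    · exact (Finset.eq_of_subset_of_card_le h hcard.le).symm
  have hcards : Finset.card '' s ⊆ Set.Iic (Fintype.card A) := by
    rintro _ ⟨X, -, rfl⟩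
    exact Finset.card_le_univ X
  calc s.ncard = (Finset.card '' s).ncard := hinj.ncard_image.symm
    _ ≤ (Set.Iic (Fintype.card A)).ncard := Set.ncard_le_ncard hcards
    _ = Fintype.card A + 1 := Set.ncard_Iic_nat _

theorem MonotoneOn.isChain_image {α β : Type*} [LinearOrder α] [Preorder β]
    {f : α → β} {s : Set α} (hf : MonotoneOn f s) : IsChain (· ≤ ·) (f '' s) := by
  rintro _ ⟨a, ha, rfl⟩ _ ⟨b, hb, rfl⟩ -
  rcases le_total a b with hab | hba
  · exact Or.inl (hf ha hb hab)
  · exact Or.inr (hf hb ha hba)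

section ComparativeStatics

variable {A : Type*} [DecidableEq A] {f c : Finset A → ℝ}

theorem utility_le_utility_union
    (hcsub : ∀ S T : Finset A, c (S ∪ T) + c (S ∩ T) ≤ c S + c T)
    (hfmono : ∀ S T : Finset A, S ⊆ T → f S ≤ f T)
    (hfsuper : ∀ S T : Finset A, f S + f T ≤ f (S ∪ T) + f (S ∩ T))
    {α β : ℝ} (hα : 0 ≤ α) (hαβ : α ≤ β) {S : Finset A}
    (hS : ∀ U : Finset A, α * f U - c U ≤ α * f S - c S) (T : Finset A) :
    β * f T - c T ≤ β * f (S ∪ T) - c (S ∪ T) := by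
  have hS_inter := hS (S ∩ T)
  have hc := hcsub S T
  have hf_gain : α * (f S - f (S ∩ T)) ≤ α * (f (S ∪ T) - f T) :=
    mul_le_mul_of_nonneg_left (by linarith [hfsuper S T]) hα
  have hf_scale : α * (f (S ∪ T) - f T) ≤ β * (f (S ∪ T) - f T) :=
    mul_le_mul_of_nonneg_right hαβ (sub_nonneg.2 (hfmono _ _ Finset.subset_union_right))
  linarith

theorem monotoneOn_of_maximal_maximizer
    (hcsub : ∀ S T : Finset A, c (S ∪ T) + c (S ∩ T) ≤ c S + c T)
    (hfmono : ∀ S T : Finset A, S ⊆ T → f S ≤ f T)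
    (hfsuper : ∀ S T : Finset A, f S + f T ≤ f (S ∪ T) + f (S ∩ T))
    {I : Set ℝ} (hI : I ⊆ Set.Ici 0) {D : ℝ → Finset A}
    (hDmax : ∀ α ∈ I, ∀ S : Finset A, α * f S - c S ≤ α * f (D α) - c (D α))
    (hDtop : ∀ α ∈ I, ∀ T : Finset A,
      (∀ S : Finset A, α * f S - c S ≤ α * f T - c T) → ¬ D α ⊂ T) :
    MonotoneOn D I := by
  intro α hα β hβ hαβ
  have hunion : ∀ U : Finset A, β * f U - c U ≤ β * f (D α ∪ D β) - c (D α ∪ D β) :=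
    fun U => (hDmax β hβ U).trans <|
      utility_le_utility_union hcsub hfmono hfsuper (hI hα) hαβ (hDmax α hα) (D β)
  have heq : D β = D α ∪ D β := by
    by_contra hne
    exact hDtop β hβ _ hunion (Finset.ssubset_iff_subset_ne.2 ⟨Finset.subset_union_right, hne⟩)
  rw [heq]
  exact Finset.subset_union_left

end ComparativeStatics

theorem stmt6_general {A : Type*} [Fintype A] [DecidableEq A]
    (f c : Finset A → ℝ)
    (hcsub : ∀ S T : Finset A, c (S ∪ T) + c (S ∩ T) ≤ c S + c T)
    (hfmono : ∀ S T : Finset A, S ⊆ T → f S ≤ f T)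
    (hfsuper : ∀ S T : Finset A, f S + f T ≤ f (S ∪ T) + f (S ∩ T))
    (D : ℝ → Finset A)
    (hDmax : ∀ α ∈ Set.Icc (0:ℝ) 1,
      ∀ S : Finset A, α * f S - c S ≤ α * f (D α) - c (D α))
    (hDtop : ∀ α ∈ Set.Icc (0:ℝ) 1, ∀ T : Finset A,
      (∀ S : Finset A, α * f S - c S ≤ α * f T - c T) → ¬ D α ⊂ T) :
    (D '' Set.Icc (0:ℝ) 1).ncard ≤ Fintype.card A + 1 :=
  Finset.ncard_le_card_add_one_of_isChain <| MonotoneOn.isChain_image <|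
    monotoneOn_of_maximal_maximizer hcsub hfmono hfsuper (fun _ hα => hα.1) hDmax hDtop

/-- With monotone submodular costs and monotone supermodular
rewards, the number of distinct inclusion-maximal maximizers of
`S ↦ α·f(S) − c(S)`, as `α` ranges over `[0,1]`, is at most `|A| + 1`. -/
theorem stmt6 {A : Type*} [Fintype A] [DecidableEq A]
    (f c : Finset A → ℝ)
    (hcmono : ∀ S T : Finset A, S ⊆ T → c S ≤ c T)
    (hcsub : ∀ S T : Finset A, c (S ∪ T) + c (S ∩ T) ≤ c S + c T)
    (hfmono : ∀ S T : Finset A, S ⊆ T → f S ≤ f T)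
    (hfsuper : ∀ S T : Finset A, f S + f T ≤ f (S ∪ T) + f (S ∩ T))
    (D : ℝ → Finset A)
    (hDmax : ∀ α ∈ Set.Icc (0:ℝ) 1,
      ∀ S : Finset A, α * f S - c S ≤ α * f (D α) - c (D α))
    (hDtop : ∀ α ∈ Set.Icc (0:ℝ) 1, ∀ T : Finset A,
      (∀ S : Finset A, α * f S - c S ≤ α * f T - c T) → ¬ D α ⊂ T) :
    (D '' Set.Icc (0:ℝ) 1).ncard ≤ Fintype.card A + 1 :=
  stmt6_general f c hcsub hfmono hfsuper D hDmax hDtop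
end

section
/- For every cost function c : 2^A → ℝ≥0 and reward function f : 2^A → [0,1], the optimal contract α* ∈ [0,1] maximizing the principal's utility (1−α)·f(S_α) is attained at a critical value, i.e., at a point α where the demanded set changes (or at α = 0), assuming the agent breaks ties in favor of higher f. -/
/-!
The demanded reward `f (S α)` is nondecreasing in `α`. On the set of contracts where the agent
demands a fixed `T`, the principal's utility `(1 - α) * f T` decreases in `α`, so it is largest
at the infimum `β` of that set. By continuity `T` is still a best response at `β`, so tie-breaking
gives `f (S β) = f T`: the infimum does at least as well. Finitely many demands leave finitely
many candidates, one of which is optimal. At an optimum `a > 0` with `f (S a) > 0`, a demand that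
stays constant just below `a` would let the principal do strictly better there, so `a` is critical;
if `f (S a) = 0` the optimal value is `0` and `α = 0` is optimal as well.
-/

open Set

def principalUtility {ι : Type*} (f : ι → ℝ) (S : ℝ → ι) (α : ℝ) : ℝ :=
  (1 - α) * f (S α)

noncomputable def lowestContract {ι : Type*} (S : ℝ → ι) (T : ι) : ℝ :=
  sInf (Icc 0 1 ∩ S ⁻¹' {T})

namespace Contract

variable {ι : Type*} {f c : ι → ℝ} {S : ℝ → ι}

theorem monotone_comp (hmax : ∀ α T, α * f T - c T ≤ α * f (S α) - c (S α)) :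
    Monotone (f ∘ S) := by
  intro a b hab
  rcases hab.eq_or_lt with rfl | hlt
  · rfl
  · have hab' := hmax a (S b)
    have hba := hmax b (S a)
    show f (S a) ≤ f (S b)
    nlinarith

theorem le_of_mem_closure_preimage (hmax : ∀ α T, α * f T - c T ≤ α * f (S α) - c (S α))
    (htie : ∀ α T, α * f T - c T = α * f (S α) - c (S α) → f T ≤ f (S α))
    {T : ι} {β : ℝ} (hβ : β ∈ closure (S ⁻¹' {T})) : f T ≤ f (S β) := by
  have hclosed : IsClosed {α : ℝ | α * f (S β) - c (S β) ≤ α * f T - c T} :=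
    isClosed_le (by fun_prop) (by fun_prop)
  have hT_best : β * f (S β) - c (S β) ≤ β * f T - c T :=
    closure_minimal (fun α (hα : S α = T) => hα ▸ hmax α (S β)) hclosed hβ
  exact htie β T (le_antisymm (hmax β T) hT_best)

theorem lowestContract_mem_closure {T : ι} (hT : T ∈ S '' Icc 0 1) :
    lowestContract S T ∈ closure (Icc 0 1 ∩ S ⁻¹' {T}) := by
  obtain ⟨α, hα, rfl⟩ := hT
  exact csInf_mem_closure ⟨α, hα, rfl⟩ ⟨0, fun x hx => hx.1.1⟩

theorem lowestContract_mem_Icc {T : ι} (hT : T ∈ S '' Icc 0 1) :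
    lowestContract S T ∈ Icc (0 : ℝ) 1 :=
  closure_minimal inter_subset_left isClosed_Icc (lowestContract_mem_closure hT)

theorem le_apply_lowestContract (hmax : ∀ α T, α * f T - c T ≤ α * f (S α) - c (S α))
    (htie : ∀ α T, α * f T - c T = α * f (S α) - c (S α) → f T ≤ f (S α))
    (hf : ∀ T, 0 ≤ f T) {α : ℝ} (hα : α ∈ Icc (0 : ℝ) 1) :
    principalUtility f S α ≤ principalUtility f S (lowestContract S (S α)) := by
  have hclosure := lowestContract_mem_closure (mem_image_of_mem S hα)
  have hle : lowestContract S (S α) ≤ α := csInf_le ⟨0, fun x hx => hx.1.1⟩ ⟨hα, rfl⟩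
  have hfeq : f (S (lowestContract S (S α))) = f (S α) :=
    le_antisymm (monotone_comp hmax hle)
      (le_of_mem_closure_preimage hmax htie (closure_mono inter_subset_right hclosure))
  unfold principalUtility
  rw [hfeq]
  exact mul_le_mul_of_nonneg_right (by linarith) (hf _)

theorem exists_isMaxOn [Finite ι] (hmax : ∀ α T, α * f T - c T ≤ α * f (S α) - c (S α))
    (htie : ∀ α T, α * f T - c T = α * f (S α) - c (S α) → f T ≤ f (S α))
    (hf : ∀ T, 0 ≤ f T) :
    ∃ a ∈ Icc (0 : ℝ) 1, IsMaxOn (principalUtility f S) (Icc 0 1) a := by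
  obtain ⟨T, hT, hbest⟩ :=
    (S '' Icc 0 1).exists_max_image (fun T => principalUtility f S (lowestContract S T))
      (toFinite _) ⟨S 0, 0, left_mem_Icc.mpr zero_le_one, rfl⟩
  refine ⟨_, lowestContract_mem_Icc hT, fun α hα => ?_⟩
  exact (le_apply_lowestContract hmax htie hf hα).trans (hbest _ (mem_image_of_mem S hα))

theorem apply_sub_ne_of_isMaxOn {a ε : ℝ} (ha : a ≤ 1)
    (hopt : IsMaxOn (principalUtility f S) (Icc 0 1) a) (hpos : 0 < f (S a))
    (hε : ε ∈ Ioo 0 a) : S (a - ε) ≠ S a := by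
  intro hS
  have hle := isMaxOn_iff.mp hopt (a - ε) ⟨by linarith [hε.2], by linarith [hε.1]⟩
  unfold principalUtility at hle
  rw [hS] at hle
  nlinarith [hε.1]

theorem exists_isMaxOn_critical (hf : ∀ T, 0 ≤ f T) {a : ℝ} (ha : a ∈ Icc (0 : ℝ) 1)
    (hopt : IsMaxOn (principalUtility f S) (Icc 0 1) a) :
    ∃ a' ∈ Icc (0 : ℝ) 1, IsMaxOn (principalUtility f S) (Icc 0 1) a' ∧
      (a' = 0 ∨ ∃ ε₀ > 0, ∀ ε ∈ Ioo 0 ε₀, S (a' - ε) ≠ S a') := by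
  rcases (hf (S a)).eq_or_lt with hzero | hpos
  · refine ⟨0, left_mem_Icc.mpr zero_le_one, fun α hα => ?_, Or.inl rfl⟩
    have hle : principalUtility f S α ≤ 0 := by
      simpa [principalUtility, ← hzero] using isMaxOn_iff.mp hopt α hα
    exact hle.trans (by simpa [principalUtility] using hf (S 0))
  · rcases ha.1.eq_or_lt with rfl | hpos_a
    · exact ⟨0, ha, hopt, Or.inl rfl⟩
    · exact ⟨a, ha, hopt,
        Or.inr ⟨a, hpos_a, fun ε hε => apply_sub_ne_of_isMaxOn ha.2 hopt hpos hε⟩⟩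

end Contract

theorem stmt11_general {A : Type*} [Fintype A]
    (f c : Finset A → ℝ)
    (hf : ∀ T : Finset A, f T ∈ Set.Icc (0:ℝ) 1)
    (S : ℝ → Finset A)
    (hmax : ∀ α : ℝ, ∀ T : Finset A,
      α * f T - c T ≤ α * f (S α) - c (S α))
    (htie : ∀ α : ℝ, ∀ T : Finset A,
      α * f T - c T = α * f (S α) - c (S α) → f T ≤ f (S α)) :
    ∃ αopt ∈ Set.Icc (0:ℝ) 1,
      (∀ α ∈ Set.Icc (0:ℝ) 1, (1 - α) * f (S α) ≤ (1 - αopt) * f (S αopt)) ∧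
      (αopt = 0 ∨ ∃ ε₀ > 0, ∀ ε ∈ Set.Ioo 0 ε₀, S (αopt - ε) ≠ S αopt) := by
  have hf₀ : ∀ T, 0 ≤ f T := fun T => (hf T).1
  obtain ⟨a, ha, hopt⟩ := Contract.exists_isMaxOn hmax htie hf₀
  obtain ⟨a', ha', hopt', hcrit⟩ := Contract.exists_isMaxOn_critical hf₀ ha hopt
  exact ⟨a', ha', isMaxOn_iff.mp hopt', hcrit⟩

/-- For nonnegative costs and rewards in `[0,1]`, with the
agent's best response `S : ℝ → Finset A` (a utility maximizer, breaking ties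
in favor of higher `f`), the principal's utility `(1−α)·f(S_α)` attains its
supremum over `[0,1]` at some point which is either `0` or a critical value,
i.e. a point where the demanded set differs from the demand just below it. -/
theorem stmt11 {A : Type*} [Fintype A] [DecidableEq A]
    (f c : Finset A → ℝ)
    (hc : ∀ T : Finset A, 0 ≤ c T)
    (hf : ∀ T : Finset A, f T ∈ Set.Icc (0:ℝ) 1)
    (S : ℝ → Finset A)
    (hmax : ∀ α : ℝ, ∀ T : Finset A,
      α * f T - c T ≤ α * f (S α) - c (S α))
    (htie : ∀ α : ℝ, ∀ T : Finset A,
      α * f T - c T = α * f (S α) - c (S α) → f T ≤ f (S α)) :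
    ∃ αopt ∈ Set.Icc (0:ℝ) 1,
      (∀ α ∈ Set.Icc (0:ℝ) 1, (1 - α) * f (S α) ≤ (1 - αopt) * f (S αopt)) ∧
      (αopt = 0 ∨ ∃ ε₀ > 0, ∀ ε ∈ Set.Ioo 0 ε₀, S (αopt - ε) ≠ S αopt) :=
  stmt11_general f c hf S hmax htie
end

section
/- In the matching-based setting with one-sided costs (c_{v,u} = c_u for all edges (v,u)) and nonnegative edge rewards, for every contract α ∈ [0,1]: if T_α ⊆ U maximizes α·f'(T) − Σ_{u∈T} c_u over T ⊆ U, where f'(T) is the max-weight matching value in the subgraph induced by V and T, then the max-weight matching A(T_α) in the subgraph induced by T_α achieves max over matchings S ⊆ A of α·f(S) − c(S). -/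
/-- A set of edges of a bipartite graph (edges are pairs in `V × U`) is a
matching if no two distinct edges share an endpoint. -/
def IsBipMatching {V U : Type*} (M : Finset (V × U)) : Prop :=
  ∀ e ∈ M, ∀ e' ∈ M, e ≠ e' → e.1 ≠ e'.1 ∧ e.2 ≠ e'.2

/-!
With one-sided costs, the cost of a matching `S` is exactly `c'(T)` for the set `T` of its
`U`-endpoints, while its reward is at most `f'(T)`. Hence `α f(S) - c(S) ≤ α f'(T) - c'(T)
≤ α f'(T_α) - c'(T_α)`, and the max-weight matching `M` on `T_α` attains `f'(T_α)` at cost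
at most `c'(T_α)`.
-/

namespace IsBipMatching

variable {V U : Type*} {M : Finset (V × U)}

theorem injOn_snd (hM : IsBipMatching M) : Set.InjOn Prod.snd (M : Set (V × U)) := by
  intro e he e' he' h
  by_contra hne
  exact (hM e he e' he' hne).2 h

theorem sum_image_snd {β : Type*} [AddCommMonoid β] [DecidableEq U] (hM : IsBipMatching M)
    (c : U → β) :
    ∑ u ∈ M.image Prod.snd, c u = ∑ e ∈ M, c e.2 :=
  Finset.sum_image hM.injOn_snd

theorem sum_snd_le_sum [DecidableEq U] (hM : IsBipMatching M) {c : U → ℝ}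
    (hc : ∀ u, 0 ≤ c u) {T : Finset U} (hMT : M.image Prod.snd ⊆ T) :
    ∑ e ∈ M, c e.2 ≤ ∑ u ∈ T, c u := by
  rw [← hM.sum_image_snd c]
  exact Finset.sum_le_sum_of_subset_of_nonneg hMT fun u _ _ => hc u

end IsBipMatching

/-- One-sided costs. If `T_α ⊆ U` maximizes
`α·f'(T) − Σ_{u ∈ T} c_u`, where `f'(T)` is the max weight of a matching in
`A` whose `U`-endpoints lie in `T`, then any max-weight matching `M` whose
`U`-endpoints lie in `T_α` (i.e. achieving `f'(T_α)`) maximizes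
`α·f(S) − c(S)` over all matchings `S ⊆ A`. -/
theorem stmt15 {V U : Type*} [Fintype V] [Fintype U]
    [DecidableEq V] [DecidableEq U]
    (A : Finset (V × U)) (fw : V × U → ℝ) (cu : U → ℝ)
    (hcu : ∀ u : U, 0 ≤ cu u)
    (α : ℝ) (hα : α ∈ Set.Icc (0:ℝ) 1)
    [DecidablePred (IsBipMatching (V := V) (U := U))]
    (f' : Finset U → ℝ)
    (hf' : ∀ T : Finset U,
      f' T = ((A.powerset.filter (fun M =>
          IsBipMatching M ∧ M.image Prod.snd ⊆ T)).sup'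
        ⟨∅, by simp [IsBipMatching]⟩ (fun M => ∑ e ∈ M, fw e)))
    (Tα : Finset U)
    (hTα : ∀ T : Finset U,
      α * f' T - ∑ u ∈ T, cu u ≤ α * f' Tα - ∑ u ∈ Tα, cu u)
    (M : Finset (V × U)) (hMm : IsBipMatching M)
    (hMT : M.image Prod.snd ⊆ Tα)
    (hMopt : (∑ e ∈ M, fw e) = f' Tα) :
    ∀ S : Finset (V × U), S ⊆ A → IsBipMatching S →
      α * (∑ e ∈ S, fw e) - (∑ e ∈ S, cu e.2) ≤
        α * (∑ e ∈ M, fw e) - (∑ e ∈ M, cu e.2) := by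
  intro S hSA hSm
  have hfS : ∑ e ∈ S, fw e ≤ f' (S.image Prod.snd) := by
    rw [hf']
    exact Finset.le_sup' (fun M => ∑ e ∈ M, fw e)
      (Finset.mem_filter.mpr ⟨Finset.mem_powerset.mpr hSA, hSm, subset_rfl⟩)
  calc α * (∑ e ∈ S, fw e) - (∑ e ∈ S, cu e.2)
      ≤ α * f' (S.image Prod.snd) - ∑ u ∈ S.image Prod.snd, cu u := by
        rw [hSm.sum_image_snd]
        gcongr
        exact hα.1
    _ ≤ α * f' Tα - ∑ u ∈ Tα, cu u := hTα _
    _ ≤ α * (∑ e ∈ M, fw e) - (∑ e ∈ M, cu e.2) := by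
        rw [hMopt]
        gcongr
        exact hMm.sum_snd_le_sum hcu hMT
end

section
/- In the matching-based setting with one-sided costs, if S_α is a matching maximizing α·f(S) − c(S) over all matchings S ⊆ A, then the set U(S_α) of U-vertices matched by S_α maximizes α·f'(T) − c'(T) over all T ⊆ U, and the two optimal values are equal. -/
/-!
A matching `M ⊆ A` with `U(M) ⊆ T` has cost `c(M) = c'(U(M)) ≤ c'(T)`, so every value
`α·f'(T) − c'(T)` is dominated by `α·f(M) − c(M)` for a matching `M` realizing `f'(T)`, hence by
the optimum over matchings. Conversely `S_α` itself is admissible for `f'(U(S_α))`, and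
`c'(U(S_α)) = c(S_α)`, so `T = U(S_α)` attains that optimum.
-/

section
variable {V U : Type*}

lemma isBipMatching_empty : IsBipMatching (∅ : Finset (V × U)) := by
  simp [IsBipMatching]

variable [DecidableEq U]

lemma IsBipMatching.sum_image_snd_s16 {M : Finset (V × U)} (hM : IsBipMatching M)
    {β : Type*} [AddCommMonoid β] (g : U → β) :
    ∑ u ∈ M.image Prod.snd, g u = ∑ e ∈ M, g e.2 :=
  Finset.sum_image fun x hx y hy hxy => by_contra fun hne => (hM x hx y hy hne).2 hxy

variable [DecidablePred (IsBipMatching (V := V) (U := U))]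

def matchingsWithin (A : Finset (V × U)) (T : Finset U) : Finset (Finset (V × U)) :=
  A.powerset.filter fun M => IsBipMatching M ∧ M.image Prod.snd ⊆ T

lemma mem_matchingsWithin {A M : Finset (V × U)} {T : Finset U} :
    M ∈ matchingsWithin A T ↔ M ⊆ A ∧ IsBipMatching M ∧ M.image Prod.snd ⊆ T := by
  simp [matchingsWithin]

lemma matchingsWithin_nonempty (A : Finset (V × U)) (T : Finset U) :
    (matchingsWithin A T).Nonempty :=
  ⟨∅, mem_matchingsWithin.2 ⟨Finset.empty_subset _, isBipMatching_empty, by simp⟩⟩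

/-- The function `f'` of the paper. -/
noncomputable def maxWeightWithin (A : Finset (V × U)) (fw : V × U → ℝ) (T : Finset U) : ℝ :=
  (matchingsWithin A T).sup' (matchingsWithin_nonempty A T) fun M => ∑ e ∈ M, fw e

variable {A : Finset (V × U)} {fw : V × U → ℝ} {cu : U → ℝ} {α : ℝ}

lemma sum_le_maxWeightWithin {M : Finset (V × U)} {T : Finset U} (hMA : M ⊆ A)
    (hM : IsBipMatching M) (hMT : M.image Prod.snd ⊆ T) :
    ∑ e ∈ M, fw e ≤ maxWeightWithin A fw T :=
  Finset.le_sup' (fun M => ∑ e ∈ M, fw e) (mem_matchingsWithin.2 ⟨hMA, hM, hMT⟩)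

lemma exists_maxWeightWithin_eq (A : Finset (V × U)) (fw : V × U → ℝ) (T : Finset U) :
    ∃ M ⊆ A, IsBipMatching M ∧ M.image Prod.snd ⊆ T ∧
      maxWeightWithin A fw T = ∑ e ∈ M, fw e := by
  obtain ⟨M, hM, hmax⟩ := Finset.exists_mem_eq_sup' (matchingsWithin_nonempty A T)
    fun M => ∑ e ∈ M, fw e
  obtain ⟨hMA, hMm, hMT⟩ := mem_matchingsWithin.1 hM
  exact ⟨M, hMA, hMm, hMT, hmax⟩

lemma maxWeightWithin_objective_le (hcu : ∀ u, 0 ≤ cu u) {b : ℝ}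
    (hopt : ∀ S ⊆ A, IsBipMatching S → α * ∑ e ∈ S, fw e - ∑ e ∈ S, cu e.2 ≤ b)
    (T : Finset U) :
    α * maxWeightWithin A fw T - ∑ u ∈ T, cu u ≤ b := by
  obtain ⟨M, hMA, hMm, hMT, hmax⟩ := exists_maxWeightWithin_eq A fw T
  have hcost : ∑ e ∈ M, cu e.2 ≤ ∑ u ∈ T, cu u := by
    rw [← hMm.sum_image_snd_s16]
    exact Finset.sum_le_sum_of_subset_of_nonneg hMT fun u _ _ => hcu u
  rw [hmax]
  linarith [hopt M hMA hMm]

lemma objective_le_maxWeightWithin_image (hα : 0 ≤ α) {S : Finset (V × U)} (hSA : S ⊆ A)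
    (hS : IsBipMatching S) :
    α * ∑ e ∈ S, fw e - ∑ e ∈ S, cu e.2 ≤
      α * maxWeightWithin A fw (S.image Prod.snd) - ∑ u ∈ S.image Prod.snd, cu u := by
  rw [hS.sum_image_snd_s16]
  gcongr
  exact sum_le_maxWeightWithin hSA hS subset_rfl

end

/-- One-sided costs. If a matching `S_α ⊆ A` maximizes
`α·f(S) − c(S)` over all matchings in `A`, then its set `U(S_α)` of matched
`U`-vertices maximizes `α·f'(T) − c'(T)` over `T ⊆ U`, and the two optimal
values coincide. -/
theorem stmt16 {V U : Type*} [Fintype V] [Fintype U]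
    [DecidableEq V] [DecidableEq U]
    (A : Finset (V × U)) (fw : V × U → ℝ) (cu : U → ℝ)
    (hcu : ∀ u : U, 0 ≤ cu u)
    (α : ℝ) (hα : α ∈ Set.Icc (0:ℝ) 1)
    [DecidablePred (IsBipMatching (V := V) (U := U))]
    (f' : Finset U → ℝ)
    (hf' : ∀ T : Finset U,
      f' T = ((A.powerset.filter (fun M =>
          IsBipMatching M ∧ M.image Prod.snd ⊆ T)).sup'
        ⟨∅, by simp [IsBipMatching]⟩ (fun M => ∑ e ∈ M, fw e)))
    (Sα : Finset (V × U)) (hSαA : Sα ⊆ A) (hSαm : IsBipMatching Sα)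
    (hSαopt : ∀ S : Finset (V × U), S ⊆ A → IsBipMatching S →
      α * (∑ e ∈ S, fw e) - (∑ e ∈ S, cu e.2) ≤
        α * (∑ e ∈ Sα, fw e) - (∑ e ∈ Sα, cu e.2)) :
    (∀ T : Finset U,
      α * f' T - ∑ u ∈ T, cu u ≤
        α * f' (Sα.image Prod.snd) - ∑ u ∈ Sα.image Prod.snd, cu u) ∧
    α * f' (Sα.image Prod.snd) - (∑ u ∈ Sα.image Prod.snd, cu u) =
      α * (∑ e ∈ Sα, fw e) - (∑ e ∈ Sα, cu e.2) := by
  obtain rfl : f' = maxWeightWithin A fw := funext hf'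
  have hle := maxWeightWithin_objective_le hcu hSαopt
  have hopt := le_antisymm (hle (Sα.image Prod.snd))
    (objective_le_maxWeightWithin_image hα.1 hSαA hSαm)
  exact ⟨fun T => (hle T).trans_eq hopt.symm, hopt⟩
end

section
/- Let f be a matching-based reward function on a bipartite graph with n edges whose edge rewards take at most k distinct values. Then the number of distinct values of f(S) over matchings S of the graph is at most Σ_{j=0}^{n} C(j+k−1, j), and hence the number of critical values of the contract problem is O(n^{k+1}) for constant k. -/
open Finset

theorem Finset.card_sym {α : Type*} [DecidableEq α] (s : Finset α) (n : ℕ) :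
    #(s.sym n) = (#s).multichoose n := by
  have h := sym_map (n := n) (Function.Embedding.subtype (· ∈ s)) univ
  rw [univ_eq_attach, attach_map_val, ← univ_eq_attach, sym_univ] at h
  rw [h, card_map, card_univ, Sym.card_sym_eq_multichoose, Fintype.card_coe]

theorem sum_mem_image_sym {ι M : Type*} [AddCommMonoid M] [DecidableEq M]
    {A S : Finset ι} (f : ι → M) (hS : S ⊆ A) :
    ∑ e ∈ S, f e ∈ ((A.image f).sym #S).image fun m : Sym M #S => (m : Multiset M).sum :=
  mem_image.2 ⟨⟨S.val.map f, by simp⟩, mem_sym_iff.2 fun _ ha => by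
    obtain ⟨e, he, rfl⟩ := Multiset.mem_map.1 ha
    exact mem_image_of_mem f (hS he), rfl⟩

theorem card_image_sum_powerset_le {ι M : Type*} [AddCommMonoid M] [DecidableEq M]
    (A : Finset ι) (f : ι → M) :
    #(A.powerset.image fun S => ∑ e ∈ S, f e) ≤
      ∑ j ∈ range (#A + 1), (#(A.image f)).multichoose j := by
  calc #(A.powerset.image fun S => ∑ e ∈ S, f e)
      ≤ #((range (#A + 1)).biUnion fun j =>
          ((A.image f).sym j).image fun m : Sym M j => (m : Multiset M).sum) := by
        refine card_le_card fun x hx => ?_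
        obtain ⟨S, hSA, rfl⟩ := mem_image.1 hx
        have hSA := mem_powerset.1 hSA
        exact mem_biUnion.2 ⟨#S, mem_range_succ_iff.2 (card_le_card hSA), sum_mem_image_sym f hSA⟩
    _ ≤ ∑ j ∈ range (#A + 1), #((A.image f).sym j) :=
        card_biUnion_le.trans (sum_le_sum fun _ _ => card_image_le)
    _ = _ := by simp only [card_sym]

theorem stmt18_general {V U : Type*}
    (A : Finset (V × U)) (fe : V × U → ℝ) (n k : ℕ)
    (hn : A.card = n) (hk : (A.image fe).card ≤ k)
    [DecidablePred (IsBipMatching (V := V) (U := U))]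
    (CV : Finset ℝ) (Sfun : ℝ → Finset (V × U))
    (hSfun : ∀ α ∈ CV, Sfun α ⊆ A ∧ IsBipMatching (Sfun α))
    (hdist : ∀ α ∈ CV, ∀ β ∈ CV, α ≠ β →
      (∑ e ∈ Sfun α, fe e) ≠ ∑ e ∈ Sfun β, fe e) :
    ((A.powerset.filter IsBipMatching).image
        (fun S => ∑ e ∈ S, fe e)).card ≤
      (∑ j ∈ Finset.range (n + 1), (j + k - 1).choose j) ∧
    CV.card ≤ ∑ j ∈ Finset.range (n + 1), (j + k - 1).choose j := by
  have hvalues : #((A.powerset.filter IsBipMatching).image fun S => ∑ e ∈ S, fe e) ≤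
      ∑ j ∈ range (n + 1), (j + k - 1).choose j :=
    calc _ ≤ #(A.powerset.image fun S => ∑ e ∈ S, fe e) :=
          card_le_card (image_subset_image (filter_subset _ _))
      _ ≤ ∑ j ∈ range (#A + 1), (#(A.image fe)).multichoose j := card_image_sum_powerset_le A fe
      _ ≤ _ := hn ▸ sum_le_sum fun j _ => by
          rw [Nat.multichoose_eq]
          exact Nat.choose_le_choose j (by omega)
  refine ⟨hvalues, (card_le_card_of_injOn (fun α => ∑ e ∈ Sfun α, fe e) ?_ ?_).trans hvalues⟩
  · intro α hα
    obtain ⟨hSA, hS⟩ := hSfun α hα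
    exact mem_image_of_mem _ (mem_filter.2 ⟨mem_powerset.2 hSA, hS⟩)
  · intro α hα β hβ hαβ
    by_contra hne
    exact hdist α hα β hβ hne hαβ

/-- If the edge rewards of a bipartite graph with `n` edges
take at most `k` distinct values, then the number of distinct values of
`f(S) = Σ_{e ∈ S} f_e` over matchings `S` is at most
`Σ_{j=0}^{n} C(j+k−1, j)`; consequently any set of critical values (whose
best responses are matchings with pairwise distinct `f`-values) has
cardinality at most this sum. -/
theorem stmt18 {V U : Type*} [Fintype V] [Fintype U]
    [DecidableEq V] [DecidableEq U]
    (A : Finset (V × U)) (fe : V × U → ℝ) (n k : ℕ)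
    (hn : A.card = n) (hk : (A.image fe).card ≤ k)
    [DecidablePred (IsBipMatching (V := V) (U := U))]
    (CV : Finset ℝ) (Sfun : ℝ → Finset (V × U))
    (hSfun : ∀ α ∈ CV, Sfun α ⊆ A ∧ IsBipMatching (Sfun α))
    (hdist : ∀ α ∈ CV, ∀ β ∈ CV, α ≠ β →
      (∑ e ∈ Sfun α, fe e) ≠ ∑ e ∈ Sfun β, fe e) :
    ((A.powerset.filter IsBipMatching).image
        (fun S => ∑ e ∈ S, fe e)).card ≤
      (∑ j ∈ Finset.range (n + 1), (j + k - 1).choose j) ∧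
    CV.card ≤ ∑ j ∈ Finset.range (n + 1), (j + k - 1).choose j :=
  stmt18_general A fe n k hn hk CV Sfun hSfun hdist
end
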